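/- Under the stated setting, suppose condition (ii) of the approximation theorem holds (liminf_ν E_{μ^ν}[G^ν(ξ,x^ν)] ≥ E_μ[G(ξ,x)] componentwise for every x^ν → x), and conditions (i) and (iii) hold at every point x₀ ∈ dom g₀ with the same parameter sequence λ^ν. Then f^ν epi-converges to f: for every (u,x) ∈ ℝ^m × ℝⁿ, liminf_ν f^ν(u^ν,x^ν) ≥ f(u,x) for every sequence (u^ν,x^ν) → (u,x), and limsup_ν f^ν(u^ν,x^ν) ≤ f(u,x) for some sequence (u^ν,x^ν) → (u,x). -/

import Mathlib

open MeasureTheory Filter Topology Metric Set Pointwise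

noncomputable section

/-- Euclidean (ℓ²) norm on `Fin m → ℝ`. -/
def en2 {m : ℕ} (u : Fin m → ℝ) : ℝ := Real.sqrt (∑ i, u i ^ 2)

/-- Componentwise expectation of a vector-valued integrand. -/
def EV {d n m : ℕ} (μ : Measure (EuclideanSpace ℝ (Fin d)))
    (G : EuclideanSpace ℝ (Fin d) → EuclideanSpace ℝ (Fin n) → Fin m → ℝ)
    (x : EuclideanSpace ℝ (Fin n)) : Fin m → ℝ :=
  fun i => ∫ ξ, G ξ x i ∂μ

/-- The Rockafellian `f`. -/
def rock {d n m : ℕ} (g0 : EuclideanSpace ℝ (Fin n) → EReal)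
    (h : (Fin m → ℝ) → EReal) (μ : Measure (EuclideanSpace ℝ (Fin d)))
    (G : EuclideanSpace ℝ (Fin d) → EuclideanSpace ℝ (Fin n) → Fin m → ℝ) :
    (Fin m → ℝ) × EuclideanSpace ℝ (Fin n) → EReal :=
  fun p => g0 p.2 + h (p.1 + EV μ G p.2) + (if p.1 = 0 then (0 : EReal) else ⊤)

/-- The approximating Rockafellian with distribution `μ'`, mapping `G'`, parameters `α`, `lam`. -/
def rockApprox {d n m : ℕ} (g0 : EuclideanSpace ℝ (Fin n) → EReal)
    (h : (Fin m → ℝ) → EReal) (μ' : Measure (EuclideanSpace ℝ (Fin d)))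
    (G' : EuclideanSpace ℝ (Fin d) → EuclideanSpace ℝ (Fin n) → Fin m → ℝ)
    (α lam : ℝ) : (Fin m → ℝ) × EuclideanSpace ℝ (Fin n) → EReal :=
  fun p => g0 p.2 + h (p.1 + EV μ' G' p.2) + (((1 / (α * lam)) * en2 p.1 ^ α : ℝ) : EReal)

/-- Epi-convergence of extended-real-valued functions. -/
def EpiConverges {γ : Type*} [TopologicalSpace γ] (fs : ℕ → γ → EReal) (f : γ → EReal) : Prop :=
  ∀ z : γ,
    (∀ zs : ℕ → γ, Tendsto zs atTop (𝓝 z) → f z ≤ liminf (fun ν => fs ν (zs ν)) atTop) ∧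
    (∃ zs : ℕ → γ, Tendsto zs atTop (𝓝 z) ∧ limsup (fun ν => fs ν (zs ν)) atTop ≤ f z)

/- ### Auxiliary lemmas -/

lemma en2_nonneg {m : ℕ} (u : Fin m → ℝ) : 0 ≤ en2 u := Real.sqrt_nonneg _

lemma abs_le_en2 {m : ℕ} (u : Fin m → ℝ) (i : Fin m) : |u i| ≤ en2 u := by
  rw [en2, ← Real.sqrt_sq_eq_abs]
  exact Real.sqrt_le_sqrt (Finset.single_le_sum (fun j _ => sq_nonneg (u j)) (Finset.mem_univ i))

lemma continuous_en2 {m : ℕ} : Continuous (en2 (m := m)) := by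
  unfold en2
  exact Real.continuous_sqrt.comp (by continuity)

lemma en2_zero {m : ℕ} : en2 (0 : Fin m → ℝ) = 0 := by simp [en2]

lemma en2_pos {m : ℕ} {u : Fin m → ℝ} (hu : u ≠ 0) : 0 < en2 u := by
  rcases Function.ne_iff.1 hu with ⟨i, hi⟩
  have h1 : 0 < |u i| := abs_pos.2 (by simpa using hi)
  linarith [abs_le_en2 u i]

lemma en2_neg_smul {m : ℕ} (c : ℝ) (w : Fin m → ℝ) :
    en2 (fun i => -(c * w i)) = |c| * en2 w := by
  unfold en2
  rw [← Real.sqrt_sq_eq_abs, ← Real.sqrt_mul (sq_nonneg c), Finset.mul_sum]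
  congr 1
  exact Finset.sum_congr rfl fun i _ => by ring

/-- Epi-convergence of the approximating Rockafellians when conditions (i) and (iii)
hold at every point of dom g₀ with the same parameters λ^ν. -/
theorem epi_convergence_of_rockafellians

    {d n m : ℕ}
    (Ξ : Set (EuclideanSpace ℝ (Fin d))) (hΞne : Ξ.Nonempty) (hΞcl : IsClosed Ξ)
    (μ : Measure (EuclideanSpace ℝ (Fin d))) [IsProbabilityMeasure μ] (hμΞ : μ Ξᶜ = 0)
    (μs : ℕ → Measure (EuclideanSpace ℝ (Fin d))) [∀ ν, IsProbabilityMeasure (μs ν)]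
    (hμsΞ : ∀ ν, μs ν Ξᶜ = 0)
    (g0 : EuclideanSpace ℝ (Fin n) → EReal)
    (hg0lsc : LowerSemicontinuous g0)
    (hg0bot : ∀ x, g0 x ≠ ⊥) (hg0top : ∃ x, g0 x ≠ ⊤)
    (h : (Fin m → ℝ) → EReal)
    (hhlsc : LowerSemicontinuous h)
    (hhbot : ∀ u, h u ≠ ⊥) (hhtop : ∃ u, h u ≠ ⊤)
    (hhmono : ∀ u v : Fin m → ℝ, (∀ i, u i ≤ v i) → h u ≤ h v)
    (G : EuclideanSpace ℝ (Fin d) → EuclideanSpace ℝ (Fin n) → Fin m → ℝ)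
    (Gs : ℕ → EuclideanSpace ℝ (Fin d) → EuclideanSpace ℝ (Fin n) → Fin m → ℝ)
    (hGmeas : ∀ i, Measurable fun p : EuclideanSpace ℝ (Fin d) × EuclideanSpace ℝ (Fin n) =>
      G p.1 p.2 i)
    (hGlsc : ∀ ξ i, LowerSemicontinuous fun x => G ξ x i)
    (hGsmeas : ∀ ν i, Measurable fun p : EuclideanSpace ℝ (Fin d) × EuclideanSpace ℝ (Fin n) =>
      Gs ν p.1 p.2 i)
    (hGslsc : ∀ ν ξ i, LowerSemicontinuous fun x => Gs ν ξ x i)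
    (hbd : ∀ x, ∃ ε > 0, ∃ M : ℝ, ∀ ξ ∈ Ξ, ∀ y ∈ closedBall x ε,
        en2 (G ξ y) ≤ M ∧ ∀ ν, en2 (Gs ν ξ y) ≤ M)
    (α : ℝ) (hα : 1 ≤ α)
    (lam : ℕ → ℝ) (hlam : ∀ ν, 0 < lam ν)

    (hyp_i : ∀ x0 : EuclideanSpace ℝ (Fin n), g0 x0 ≠ ⊤ →
        ∀ ν, ∀ᵐ ξ ∂μ, ∀ i, Gs ν ξ x0 i ≤ G ξ x0 i)
    (hyp_ii : ∀ (x : EuclideanSpace ℝ (Fin n)) (xs : ℕ → EuclideanSpace ℝ (Fin n)),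
        Tendsto xs atTop (𝓝 x) → ∀ i,
        EV μ G x i ≤ liminf (fun ν => EV (μs ν) (Gs ν) (xs ν) i) atTop)
    (hyp_iii₁ : Tendsto lam atTop (𝓝 0))
    (hyp_iii₂ : ∀ x0 : EuclideanSpace ℝ (Fin n), g0 x0 ≠ ⊤ →
        Tendsto
          (fun ν => fun i => lam ν ^ (-(1 / α)) * (EV (μs ν) (Gs ν) x0 i - EV μ (Gs ν) x0 i))
          atTop (𝓝 0)) :
    EpiConverges (fun ν => rockApprox g0 h (μs ν) (Gs ν) α (lam ν)) (rock g0 h μ G) := by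
  classical
  have hα0 : (0 : ℝ) < α := lt_of_lt_of_le one_pos hα
  rintro ⟨u, x⟩
  obtain ⟨ε, hε, M, hM⟩ := hbd x
  have haeΞ : ∀ᵐ ξ ∂μ, ξ ∈ Ξ := by
    rw [ae_iff]
    exact hμΞ
  have haeΞs : ∀ ν, ∀ᵐ ξ ∂(μs ν), ξ ∈ Ξ := fun ν => by
    rw [ae_iff]; exact hμsΞ ν
  have hEVs_bound : ∀ ν, ∀ y ∈ closedBall x ε, ∀ i, |EV (μs ν) (Gs ν) y i| ≤ M := by
    intro ν y hy i
    have hb : ∀ᵐ ξ ∂(μs ν), ‖Gs ν ξ y i‖ ≤ M := by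
      filter_upwards [haeΞs ν] with ξ hξ
      exact (abs_le_en2 _ i).trans ((hM ξ hξ y hy).2 ν)
    have := norm_integral_le_of_norm_le_const (μ := μs ν) hb
    simpa [EV, measure_univ, Real.norm_eq_abs] using this
  constructor
  · -- liminf inequality
    intro zs hzs
    set us : ℕ → Fin m → ℝ := fun ν => (zs ν).1 with hus_def
    set xs : ℕ → EuclideanSpace ℝ (Fin n) := fun ν => (zs ν).2 with hxs_def
    have hxs : Tendsto xs atTop (𝓝 x) := (continuous_snd.tendsto _).comp hzs
    have hus : Tendsto us atTop (𝓝 u) := (continuous_fst.tendsto _).comp hzs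
    have hxs_ev : ∀ᶠ ν in atTop, xs ν ∈ closedBall x ε := hxs (closedBall_mem_nhds x hε)
    have hEVb : ∀ᶠ ν in atTop, ∀ i, |EV (μs ν) (Gs ν) (xs ν) i| ≤ M := by
      filter_upwards [hxs_ev] with ν hν i
      exact hEVs_bound ν _ hν i
    have hbdd : ∀ i, IsBoundedUnder (· ≥ ·) atTop (fun ν => EV (μs ν) (Gs ν) (xs ν) i) := by
      intro i
      refine ⟨-M, eventually_map.2 ?_⟩
      filter_upwards [hEVb] with ν hν
      exact neg_le_of_abs_le (hν i)
    have hpen_nonneg : ∀ ν, (0 : ℝ) ≤ 1 / (α * lam ν) * en2 (us ν) ^ α := fun ν =>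
      mul_nonneg (div_nonneg zero_le_one (mul_nonneg hα0.le (hlam ν).le))
        (Real.rpow_nonneg (en2_nonneg _) _)
    have step1 : liminf (fun ν => g0 (xs ν) + h (us ν + EV (μs ν) (Gs ν) (xs ν))) atTop
        ≤ liminf (fun ν => rockApprox g0 h (μs ν) (Gs ν) α (lam ν) (zs ν)) atTop := by
      have hev : ∀ᶠ ν in atTop,
          g0 (xs ν) + h (us ν + EV (μs ν) (Gs ν) (xs ν))
            ≤ rockApprox g0 h (μs ν) (Gs ν) α (lam ν) (zs ν) := by
        apply Eventually.of_forall
        intro ν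
        have hE : rockApprox g0 h (μs ν) (Gs ν) α (lam ν) (zs ν)
          = g0 (xs ν) + h (us ν + EV (μs ν) (Gs ν) (xs ν))
            + ((1 / (α * lam ν) * en2 (us ν) ^ α : ℝ) : EReal) := rfl
        rw [hE]
        nth_rewrite 1 [← add_zero (g0 (xs ν) + h (us ν + EV (μs ν) (Gs ν) (xs ν)))]
        exact add_le_add le_rfl (by exact_mod_cast hpen_nonneg ν)
      exact liminf_le_liminf hev
    by_cases hu0 : u = 0
    · subst hu0
      have hrock : rock g0 h μ G ((0 : Fin m → ℝ), x) = g0 x + h (EV μ G x) := by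
        simp [rock]
      rw [hrock]
      have hg0lim : g0 x ≤ liminf (fun ν => g0 (xs ν)) atTop := by
        refine (le_liminf_iff (by isBoundedDefault) (by isBoundedDefault)).2 fun c hc => ?_
        exact hxs.eventually (hg0lsc x c hc)
      have hhlim : h (EV μ G x) ≤
          liminf (fun ν => h (us ν + EV (μs ν) (Gs ν) (xs ν))) atTop := by
        refine (le_liminf_iff (by isBoundedDefault) (by isBoundedDefault)).2 fun c hc => ?_
        obtain ⟨δ, hδ, hball⟩ := Metric.eventually_nhds_iff.1 (hhlsc (EV μ G x) c hc)
        have hvδ : c < h (fun i => EV μ G x i - δ / 2) := by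
          apply hball
          rw [dist_pi_lt_iff hδ]
          intro i
          rw [Real.dist_eq]
          have he : EV μ G x i - δ / 2 - EV μ G x i = -(δ / 2) := by ring
          rw [he, abs_neg, abs_of_nonneg (by linarith)]
          linarith
        have hcomp : ∀ i : Fin m, ∀ᶠ ν in atTop,
            EV μ G x i - δ / 2 ≤ us ν i + EV (μs ν) (Gs ν) (xs ν) i := by
          intro i
          have h1 : Tendsto (fun ν => us ν i) atTop (𝓝 0) := by
            have := tendsto_pi_nhds.1 hus i
            simpa using this
          have h2 : ∀ᶠ ν in atTop, |us ν i| < δ / 4 :=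
            (Metric.tendsto_nhds.1 h1 (δ / 4) (by linarith)).mono
              (fun ν hν => by simpa [Real.dist_eq] using hν)
          have h3 : ∀ᶠ ν in atTop, EV μ G x i - δ / 4 < EV (μs ν) (Gs ν) (xs ν) i := by
            apply eventually_lt_of_lt_liminf _ (hbdd i)
            calc (EV μ G x i - δ / 4 : ℝ) < EV μ G x i := by linarith
              _ ≤ liminf (fun ν => EV (μs ν) (Gs ν) (xs ν) i) atTop := hyp_ii x xs hxs i
          filter_upwards [h2, h3] with ν ha hb
          have := abs_lt.1 ha
          linarith
        have hall : ∀ᶠ ν in atTop, ∀ i,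
            EV μ G x i - δ / 2 ≤ us ν i + EV (μs ν) (Gs ν) (xs ν) i := eventually_all.2 hcomp
        filter_upwards [hall] with ν hν
        refine lt_of_lt_of_le hvδ (hhmono _ _ ?_)
        intro i
        simpa using hν i
      calc g0 x + h (EV μ G x)
          ≤ liminf (fun ν => g0 (xs ν)) atTop
            + liminf (fun ν => h (us ν + EV (μs ν) (Gs ν) (xs ν))) atTop :=
            add_le_add hg0lim hhlim
        _ ≤ liminf (fun ν => g0 (xs ν) + h (us ν + EV (μs ν) (Gs ν) (xs ν))) atTop :=
            EReal.le_liminf_add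
        _ ≤ _ := step1
    · -- `u ≠ 0` : the liminf is `⊤`
      have htop : (⊤ : EReal) ≤
          liminf (fun ν => rockApprox g0 h (μs ν) (Gs ν) α (lam ν) (zs ν)) atTop := by
        refine (le_liminf_iff (by isBoundedDefault) (by isBoundedDefault)).2 fun c hc => ?_
        have hc' : c ≤ ((c.toReal : ℝ) : EReal) := EReal.le_coe_toReal hc.ne
        set r := c.toReal with hr
        obtain ⟨cg, _, hcg2⟩ := EReal.exists_between_coe_real (bot_lt_iff_ne_bot.2 (hg0bot x))
        have hev_g : ∀ᶠ ν in atTop, (cg : EReal) < g0 (xs ν) := hxs.eventually (hg0lsc x _ hcg2)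
        set B : Fin m → ℝ := fun i => -(M + (|u i| + 1)) with hB
        have hevB : ∀ᶠ ν in atTop, ∀ i, B i ≤ us ν i + EV (μs ν) (Gs ν) (xs ν) i := by
          apply eventually_all.2
          intro i
          have h1 : Tendsto (fun ν => us ν i) atTop (𝓝 (u i)) := tendsto_pi_nhds.1 hus i
          have h2 : ∀ᶠ ν in atTop, |us ν i - u i| < 1 :=
            (Metric.tendsto_nhds.1 h1 1 one_pos).mono
              (fun ν hν => by simpa [Real.dist_eq] using hν)
          filter_upwards [h2, hEVb] with ν ha hb
          have ha' := abs_lt.1 ha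
          have h3 := neg_le_of_abs_le (hb i)
          have h4 := neg_abs_le (u i)
          simp only [hB]
          linarith
        obtain ⟨ch, _, hch2⟩ := EReal.exists_between_coe_real (bot_lt_iff_ne_bot.2 (hhbot B))
        have hev_h : ∀ᶠ ν in atTop,
            (ch : EReal) < h (us ν + EV (μs ν) (Gs ν) (xs ν)) := by
          filter_upwards [hevB] with ν hν
          refine lt_of_lt_of_le hch2 (hhmono _ _ ?_)
          intro i
          simpa using hν i
        have hpen : Tendsto (fun ν => 1 / (α * lam ν) * en2 (us ν) ^ α) atTop atTop := by
          have h1 : Tendsto (fun ν => en2 (us ν)) atTop (𝓝 (en2 u)) :=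
            (continuous_en2.tendsto u).comp hus
          have hρ : Tendsto (fun ν => en2 (us ν) ^ α) atTop (𝓝 (en2 u ^ α)) :=
            ((Real.continuousAt_rpow_const (en2 u) α (Or.inr hα0.le)).tendsto).comp h1
          have h2 : Tendsto (fun ν => (α * lam ν)⁻¹) atTop atTop := by
            apply tendsto_inv_nhdsGT_zero.comp
            apply tendsto_nhdsWithin_of_tendsto_nhds_of_eventually_within
            · simpa using hyp_iii₁.const_mul α
            · exact Eventually.of_forall fun ν => mul_pos hα0 (hlam ν)
          have h3 : (0 : ℝ) < en2 u ^ α := Real.rpow_pos_of_pos (en2_pos hu0) α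
          simpa [one_div] using Filter.Tendsto.atTop_mul_pos h3 h2 hρ
        have hev_p : ∀ᶠ ν in atTop, r - cg - ch < 1 / (α * lam ν) * en2 (us ν) ^ α :=
          hpen.eventually_gt_atTop _
        filter_upwards [hev_g, hev_h, hev_p] with ν h1 h2 h3
        refine lt_of_le_of_lt hc' ?_
        have hlt : ((r : ℝ) : EReal) <
            ((cg + ch + 1 / (α * lam ν) * en2 (us ν) ^ α : ℝ) : EReal) := by
          exact_mod_cast by linarith
        refine lt_of_lt_of_le hlt ?_
        have hE : rockApprox g0 h (μs ν) (Gs ν) α (lam ν) (zs ν)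
            = g0 (xs ν) + h (us ν + EV (μs ν) (Gs ν) (xs ν))
              + ((1 / (α * lam ν) * en2 (us ν) ^ α : ℝ) : EReal) := rfl
        rw [hE]
        push_cast
        exact add_le_add (add_le_add h1.le h2.le) le_rfl
      exact le_trans le_top htop
  · -- limsup inequality
    by_cases hft : rock g0 h μ G (u, x) = ⊤
    · exact ⟨fun _ => (u, x), tendsto_const_nhds, hft ▸ le_top⟩
    · have hu0 : u = 0 := by
        by_contra hne
        apply hft
        show g0 x + h _ + (if u = 0 then (0 : EReal) else ⊤) = ⊤
        rw [if_neg hne]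
        rw [EReal.add_top_of_ne_bot]
        simp only [ne_eq, EReal.add_eq_bot_iff]
        push_neg
        exact ⟨hg0bot x, hhbot _⟩
      subst hu0
      have hrock : rock g0 h μ G ((0 : Fin m → ℝ), x) = g0 x + h (EV μ G x) := by
        simp [rock]
      rw [hrock] at hft ⊢
      have hg0x : g0 x ≠ ⊤ := fun htop' => hft (by rw [htop', EReal.top_add_of_ne_bot (hhbot _)])
      have hhv : h (EV μ G x) ≠ ⊤ :=
        fun htop' => hft (by rw [htop', EReal.add_top_of_ne_bot (hg0bot x)])
      have hxball : x ∈ closedBall x ε := mem_closedBall_self hε.le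
      have hintG : ∀ i, Integrable (fun ξ => G ξ x i) μ := by
        intro i
        refine (integrable_const M).mono' ?_ ?_
        · exact ((hGmeas i).comp (measurable_id.prodMk measurable_const)).aestronglyMeasurable
        · filter_upwards [haeΞ] with ξ hξ
          exact (abs_le_en2 _ i).trans (hM ξ hξ x hxball).1
      have hintGs : ∀ ν i, Integrable (fun ξ => Gs ν ξ x i) μ := by
        intro ν i
        refine (integrable_const M).mono' ?_ ?_
        · exact ((hGsmeas ν i).comp (measurable_id.prodMk measurable_const)).aestronglyMeasurable
        · filter_upwards [haeΞ] with ξ hξ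
          exact (abs_le_en2 _ i).trans ((hM ξ hξ x hxball).2 ν)
      set T : ℕ → Fin m → ℝ :=
        fun ν => fun i => lam ν ^ (-(1 / α)) * (EV (μs ν) (Gs ν) x i - EV μ (Gs ν) x i) with hT
      have hTlim : Tendsto T atTop (𝓝 0) := hyp_iii₂ x hg0x
      set w : ℕ → Fin m → ℝ := fun ν i => EV μ (Gs ν) x i - EV (μs ν) (Gs ν) x i with hw
      have hwT : ∀ ν, w ν = fun i => -(lam ν ^ (1 / α) * T ν i) := by
        intro ν
        funext i
        have h1 : lam ν ^ (1 / α) * lam ν ^ (-(1 / α)) = 1 := by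
          rw [← Real.rpow_add (hlam ν)]
          norm_num
        show EV μ (Gs ν) x i - EV (μs ν) (Gs ν) x i
            = -(lam ν ^ (1 / α) * (lam ν ^ (-(1 / α)) * (EV (μs ν) (Gs ν) x i - EV μ (Gs ν) x i)))
        rw [← mul_assoc, h1, one_mul]
        ring
      have hlrt : Tendsto (fun ν => lam ν ^ (1 / α)) atTop (𝓝 0) := by
        have hc := (Real.continuousAt_rpow_const 0 (1 / α) (Or.inr (by positivity))).tendsto
        have hcomp := hc.comp hyp_iii₁
        simp only [Function.comp_def] at hcomp
        rwa [Real.zero_rpow (by positivity : (1 / α) ≠ (0 : ℝ))] at hcomp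
      have hwlim : Tendsto w atTop (𝓝 0) := by
        rw [tendsto_pi_nhds]
        intro i
        have hTi : Tendsto (fun ν => T ν i) atTop (𝓝 0) := by
          have := tendsto_pi_nhds.1 hTlim i
          simpa using this
        have hmul := (hlrt.mul hTi).neg
        simp only [mul_zero, neg_zero] at hmul
        have : (fun ν => -(lam ν ^ (1 / α) * T ν i)) = fun ν => w ν i := by
          funext ν
          rw [hwT ν]
        rw [← this]
        simpa using hmul
      have hzstend : Tendsto (fun ν => (w ν, x)) atTop (𝓝 ((0 : Fin m → ℝ), x)) :=
        hwlim.prodMk_nhds tendsto_const_nhds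
      refine ⟨fun ν => (w ν, x), hzstend, ?_⟩
      have harg : ∀ ν, w ν + EV (μs ν) (Gs ν) x = EV μ (Gs ν) x := by
        intro ν
        funext i
        show w ν i + EV (μs ν) (Gs ν) x i = EV μ (Gs ν) x i
        rw [hw]
        ring
      have hhle : ∀ ν, h (w ν + EV (μs ν) (Gs ν) x) ≤ h (EV μ G x) := by
        intro ν
        rw [harg ν]
        apply hhmono
        intro i
        apply integral_mono_ae (hintGs ν i) (hintG i)
        filter_upwards [hyp_i x hg0x ν] with ξ hξ using hξ i
      set p : ℕ → ℝ := fun ν => 1 / (α * lam ν) * en2 (w ν) ^ α with hp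
      have hpeq : ∀ ν, p ν = (1 / α) * en2 (T ν) ^ α := by
        intro ν
        have h1 : en2 (w ν) = lam ν ^ (1 / α) * en2 (T ν) := by
          rw [hwT ν, en2_neg_smul, abs_of_nonneg (Real.rpow_nonneg (hlam ν).le _)]
        have h2 : (lam ν ^ (1 / α)) ^ α = lam ν := by
          rw [← Real.rpow_mul (hlam ν).le, one_div, inv_mul_cancel₀ (ne_of_gt hα0),
            Real.rpow_one]
        show 1 / (α * lam ν) * en2 (w ν) ^ α = 1 / α * en2 (T ν) ^ α
        rw [h1, Real.mul_rpow (Real.rpow_nonneg (hlam ν).le _) (en2_nonneg _), h2]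
        have hl : lam ν ≠ 0 := (hlam ν).ne'
        have hα' : α ≠ 0 := ne_of_gt hα0
        field_simp
      have hplim : Tendsto p atTop (𝓝 0) := by
        have hTen : Tendsto (fun ν => en2 (T ν)) atTop (𝓝 0) := by
          have := (continuous_en2.tendsto 0).comp hTlim
          simpa [en2_zero, Function.comp_def] using this
        have h4 : Tendsto (fun ν => en2 (T ν) ^ α) atTop (𝓝 0) := by
          have := ((Real.continuousAt_rpow_const 0 α (Or.inr hα0.le)).tendsto).comp hTen
          simpa [Real.zero_rpow (ne_of_gt hα0), Function.comp_def] using this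
        have h5 : Tendsto (fun ν => (1 / α) * en2 (T ν) ^ α) atTop (𝓝 0) := by
          simpa using h4.const_mul (1 / α)
        exact h5.congr fun ν => (hpeq ν).symm
      set a := (g0 x).toReal with ha
      set b := (h (EV μ G x)).toReal with hb
      have hag : ((a : ℝ) : EReal) = g0 x := EReal.coe_toReal hg0x (hg0bot x)
      have hbh : ((b : ℝ) : EReal) = h (EV μ G x) := EReal.coe_toReal hhv (hhbot _)
      have hub : ∀ ν, rockApprox g0 h (μs ν) (Gs ν) α (lam ν) (w ν, x)
          ≤ ((a + b + p ν : ℝ) : EReal) := by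
        intro ν
        show g0 x + h (w ν + EV (μs ν) (Gs ν) x) + ((p ν : ℝ) : EReal) ≤ _
        push_cast
        rw [hag, hbh]
        exact add_le_add (add_le_add le_rfl (hhle ν)) le_rfl
      have hlim : Tendsto (fun ν => ((a + b + p ν : ℝ) : EReal)) atTop
          (𝓝 ((a + b : ℝ) : EReal)) := by
        apply EReal.tendsto_coe.2
        have hconst : Tendsto (fun _ : ℕ => a + b) atTop (𝓝 (a + b)) := tendsto_const_nhds
        simpa using hconst.add hplim
      calc limsup (fun ν => rockApprox g0 h (μs ν) (Gs ν) α (lam ν) (w ν, x)) atTop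
          ≤ limsup (fun ν => ((a + b + p ν : ℝ) : EReal)) atTop :=
            limsup_le_limsup (Eventually.of_forall hub)
        _ = ((a + b : ℝ) : EReal) := hlim.limsup_eq
        _ ≤ g0 x + h (EV μ G x) := by
            push_cast
            rw [hag, hbh]

end
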